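/- arXiv:2401.07720 — 3 statements merged into one kernel-verified Lean document; each statement's English description precedes it below -/
import Mathlib

section
/- With the hypotheses and the glued metric d of the previous gluing construction (X₁, X₂ proper metric spaces glued along closed A₁ ≅ A₂ via an isometry, with A₁ nonempty), the resulting metric space (Y,d) is proper: every closed bounded subset of Y is compact. -/
/-- The glued distance on the disjoint union `X₁ ⊕ X₂`, gluing along `A₁ ⊆ X₁`,
`A₂ ⊆ X₂` via `f : A₁ → A₂`. -/
noncomputable def glueD {X₁ X₂ : Type*} [MetricSpace X₁] [MetricSpace X₂]
    {A₁ : Set X₁} {A₂ : Set X₂} (f : A₁ → A₂) : X₁ ⊕ X₂ → X₁ ⊕ X₂ → ℝ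
  | Sum.inl x, Sum.inl y => dist x y
  | Sum.inl x, Sum.inr y => ⨅ a : A₁, (dist x (a : X₁) + dist ((f a : A₂) : X₂) y)
  | Sum.inr x, Sum.inl y => ⨅ a : A₁, (dist y (a : X₁) + dist ((f a : A₂) : X₂) x)
  | Sum.inr x, Sum.inr y => dist x y

section aux

variable {X₁ X₂ : Type*} [MetricSpace X₁] [MetricSpace X₂]
    {A₁ : Set X₁} {A₂ : Set X₂} [Nonempty A₁] (f : A₁ → A₂)

/-- The auxiliary glued distance function. -/
noncomputable def glueG (x : X₁) (y : X₂) : ℝ :=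
  ⨅ a : A₁, (dist x (a : X₁) + dist ((f a : A₂) : X₂) y)

lemma glue_bdd (x : X₁) (y : X₂) :
    BddBelow (Set.range fun a : A₁ => dist x (a : X₁) + dist ((f a : A₂) : X₂) y) := by
  refine ⟨0, ?_⟩
  rintro _ ⟨a, rfl⟩
  positivity

lemma glueG_le (x : X₁) (y : X₂) (a : A₁) :
    glueG f x y ≤ dist x (a : X₁) + dist ((f a : A₂) : X₂) y :=
  ciInf_le (glue_bdd f x y) a

lemma glueG_lipY (x : X₁) (y y' : X₂) : glueG f x y ≤ glueG f x y' + dist y' y := by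
  rw [← sub_le_iff_le_add]
  refine le_ciInf fun a => sub_le_iff_le_add.mpr ?_
  calc glueG f x y ≤ dist x (a : X₁) + dist ((f a : A₂) : X₂) y := glueG_le f x y a
    _ ≤ dist x (a : X₁) + (dist ((f a : A₂) : X₂) y' + dist y' y) := by
        gcongr; exact dist_triangle _ _ _
    _ = dist x (a : X₁) + dist ((f a : A₂) : X₂) y' + dist y' y := by ring

lemma glueG_lipX (x x' : X₁) (y : X₂) : glueG f x y ≤ glueG f x' y + dist x x' := by
  rw [← sub_le_iff_le_add]
  refine le_ciInf fun a => sub_le_iff_le_add.mpr ?_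
  calc glueG f x y ≤ dist x (a : X₁) + dist ((f a : A₂) : X₂) y := glueG_le f x y a
    _ ≤ (dist x x' + dist x' (a : X₁)) + dist ((f a : A₂) : X₂) y := by
        gcongr; exact dist_triangle _ _ _
    _ = dist x' (a : X₁) + dist ((f a : A₂) : X₂) y + dist x x' := by ring

lemma glueG_contY (x : X₁) : Continuous fun y => glueG f x y := by
  refine (LipschitzWith.of_dist_le_mul (K := 1) fun y y' => ?_).continuous
  rw [Real.dist_eq, NNReal.coe_one, one_mul, abs_sub_le_iff]
  constructor
  · have := glueG_lipY f x y y'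
    rw [dist_comm y y']
    linarith
  · have := glueG_lipY f x y' y
    linarith

lemma glueG_contX (y : X₂) : Continuous fun x => glueG f x y := by
  refine (LipschitzWith.of_dist_le_mul (K := 1) fun x x' => ?_).continuous
  rw [Real.dist_eq, NNReal.coe_one, one_mul, abs_sub_le_iff]
  constructor
  · have := glueG_lipX f x x' y
    linarith
  · have := glueG_lipX f x' x y
    rw [dist_comm x x']
    linarith

lemma glueG_lower (hf : ∀ a b : A₁, dist ((f a : A₂) : X₂) ((f b : A₂) : X₂)
      = dist (a : X₁) (b : X₁)) (x : X₁) (y : X₂) (a₀ : A₁) :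
    dist ((f a₀ : A₂) : X₂) y - dist x (a₀ : X₁) ≤ glueG f x y := by
  refine le_ciInf fun a => ?_
  have h1 : dist ((f a₀ : A₂) : X₂) y ≤ dist ((f a₀ : A₂) : X₂) ((f a : A₂) : X₂)
      + dist ((f a : A₂) : X₂) y := dist_triangle _ _ _
  have h2 : dist ((a₀ : X₁)) (a : X₁) ≤ dist (a₀ : X₁) x + dist x (a : X₁) :=
    dist_triangle _ _ _
  have h3 := hf a₀ a
  have h4 : dist (a₀ : X₁) x = dist x (a₀ : X₁) := dist_comm _ _
  linarith

lemma glueG_lower' (hf : ∀ a b : A₁, dist ((f a : A₂) : X₂) ((f b : A₂) : X₂)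
      = dist (a : X₁) (b : X₁)) (x : X₁) (y : X₂) (a₀ : A₁) :
    dist x (a₀ : X₁) - dist ((f a₀ : A₂) : X₂) y ≤ glueG f x y := by
  refine le_ciInf fun a => ?_
  have h1 : dist x (a₀ : X₁) ≤ dist x (a : X₁) + dist (a : X₁) (a₀ : X₁) :=
    dist_triangle _ _ _
  have h2 : dist ((f a : A₂) : X₂) ((f a₀ : A₂) : X₂)
      ≤ dist ((f a : A₂) : X₂) y + dist y ((f a₀ : A₂) : X₂) := dist_triangle _ _ _
  have h3 := hf a a₀
  have h4 : dist y ((f a₀ : A₂) : X₂) = dist ((f a₀ : A₂) : X₂) y := dist_comm _ _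
  linarith

end aux

/-- The gluing of two proper metric spaces along nonempty closed subsets via an isometry
is proper: every closed ball of the glued metric is compact (in the disjoint-union
topology, which induces the quotient metric topology). -/
theorem glued_space_proper {X₁ X₂ : Type*} [MetricSpace X₁] [MetricSpace X₂]
    [ProperSpace X₁] [ProperSpace X₂]
    (A₁ : Set X₁) (A₂ : Set X₂) (hA₁ : IsClosed A₁) (hA₂ : IsClosed A₂)
    [Nonempty A₁] (f : A₁ → A₂)
    (hf : ∀ a b : A₁, dist ((f a : A₂) : X₂) ((f b : A₂) : X₂) = dist (a : X₁) (b : X₁))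
    (hfsurj : Function.Surjective f) :
    ∀ (p : X₁ ⊕ X₂) (r : ℝ), IsCompact {q : X₁ ⊕ X₂ | glueD f p q ≤ r} := by
  intro p r
  obtain ⟨a₀⟩ : Nonempty A₁ := inferInstance
  cases p with
  | inl x₀ =>
    have hS₁ : IsCompact (Metric.closedBall x₀ r) := isCompact_closedBall _ _
    have hS₂ : IsCompact {y : X₂ | glueG f x₀ y ≤ r} := by
      refine (isCompact_closedBall ((f a₀ : A₂) : X₂) (r + dist x₀ (a₀ : X₁))).of_isClosed_subset
        (isClosed_le (glueG_contY f x₀) continuous_const) ?_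
      intro y hy
      simp only [Set.mem_setOf_eq] at hy
      have := glueG_lower f hf x₀ y a₀
      rw [Metric.mem_closedBall, dist_comm]
      linarith
    have heq : {q : X₁ ⊕ X₂ | glueD f (Sum.inl x₀) q ≤ r}
        = Sum.inl '' Metric.closedBall x₀ r ∪ Sum.inr '' {y : X₂ | glueG f x₀ y ≤ r} := by
      ext q
      cases q with
      | inl x => simp [glueD, Metric.mem_closedBall, dist_comm]
      | inr y => simp [glueD, glueG]
    rw [heq]
    exact (hS₁.image continuous_inl).union (hS₂.image continuous_inr)
  | inr y₀ =>
    have hS₂ : IsCompact (Metric.closedBall y₀ r) := isCompact_closedBall _ _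
    have hS₁ : IsCompact {x : X₁ | glueG f x y₀ ≤ r} := by
      refine (isCompact_closedBall ((a₀ : X₁)) (r + dist ((f a₀ : A₂) : X₂) y₀)).of_isClosed_subset
        (isClosed_le (glueG_contX f y₀) continuous_const) ?_
      intro x hx
      simp only [Set.mem_setOf_eq] at hx
      have := glueG_lower' f hf x y₀ a₀
      rw [Metric.mem_closedBall]
      exact le_trans (by linarith) (le_refl _)
    have heq : {q : X₁ ⊕ X₂ | glueD f (Sum.inr y₀) q ≤ r}
        = Sum.inl '' {x : X₁ | glueG f x y₀ ≤ r} ∪ Sum.inr '' Metric.closedBall y₀ r := by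
      ext q
      cases q with
      | inl x => simp [glueD, glueG]
      | inr y => simp [glueD, Metric.mem_closedBall, dist_comm]
    rw [heq]
    exact (hS₁.image continuous_inl).union (hS₂.image continuous_inr)
end

section
/- Let (X,d) be a metric space and φ : [1,∞) → [1,∞) a continuous strictly increasing function with φ(1) = 1. Define ρ' on X × [1,∞) by ρ'((x,t),(x',t)) = φ(t)·d(x,x') (horizontal segments) and ρ'((x,t),(x,t')) = |t − t'| (vertical segments), and let ρ((x,t),(x',t')) be the infimum of Σ ρ'-lengths over all finite chains of horizontal and vertical segments joining the two points. Then ρ is a metric on X × [1,∞), and the map x ↦ (x,1) is an isometric embedding of (X,d) into (X × [1,∞), ρ). -/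
/-!
Symmetry of `ρ` comes from reversing chains and the triangle inequality from concatenating
them. Since `φ ≥ 1`, each horizontal or vertical step costs at least the distance between its
endpoints in the sup metric of `X × [1,∞)`, so `ρ` dominates that metric; this gives
definiteness and, with the one-step chain at height `1` (where `φ 1 = 1`), the isometric
embedding.
-/

/-- The half-line `[1,∞)`. -/
abbrev IciOne := {t : ℝ // 1 ≤ t}

/-- The `ρ'`-cost of a single step: horizontal steps (same height `t`) cost
`φ(t)·d(x,x')`, other steps (same `X`-coordinate, i.e. vertical) cost `|t − t'|`. -/
noncomputable def stepCost {X : Type*} [MetricSpace X] (φ : ℝ → ℝ)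
    (p q : X × IciOne) : ℝ :=
  if p.2 = q.2 then φ p.2.1 * dist p.1 q.1 else |p.2.1 - q.2.1|

/-- A valid chain: consecutive points agree in one of the two coordinates. -/
def IsHVChain {X : Type*} (l : List (X × IciOne)) : Prop :=
  List.Chain' (fun p q => p.1 = q.1 ∨ p.2 = q.2) l

/-- Total cost of a chain. -/
noncomputable def chainCost {X : Type*} [MetricSpace X] (φ : ℝ → ℝ)
    (l : List (X × IciOne)) : ℝ :=
  ((l.zip l.tail).map (fun pq => stepCost φ pq.1 pq.2)).sum

/-- The warped path distance `ρ` on `X × [1,∞)`: the infimum of chain costs over all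
chains of horizontal and vertical segments joining the two points. -/
noncomputable def warpDist {X : Type*} [MetricSpace X] (φ : ℝ → ℝ)
    (p q : X × IciOne) : ℝ :=
  sInf {c : ℝ | ∃ l : List (X × IciOne), l.head? = some p ∧ l.getLast? = some q ∧
    IsHVChain l ∧ chainCost φ l = c}

section Chains

variable {X : Type*}

theorem IsHVChain.reverse {l : List (X × IciOne)} (h : IsHVChain l) : IsHVChain l.reverse := by
  rw [IsHVChain, List.Chain', List.isChain_reverse]
  exact h.imp fun _ _ hab => hab.imp Eq.symm Eq.symm

theorem IsHVChain.append {l₁ l₂ : List (X × IciOne)} {q : X × IciOne} (h₁ : IsHVChain l₁)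
    (h₂ : IsHVChain l₂) (hq₁ : l₁.getLast? = some q) (hq₂ : l₂.head? = some q) :
    IsHVChain (l₁ ++ l₂) := by
  refine List.isChain_append.mpr ⟨h₁, h₂, fun a ha b hb => ?_⟩
  rw [hq₁, Option.mem_some_iff] at ha
  rw [hq₂, Option.mem_some_iff] at hb
  exact Or.inl (ha ▸ hb ▸ rfl)

variable [MetricSpace X] (φ : ℝ → ℝ)

theorem stepCost_self (p : X × IciOne) : stepCost φ p p = 0 := by
  simp [stepCost]

theorem stepCost_comm (p q : X × IciOne) : stepCost φ p q = stepCost φ q p := by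
  by_cases h : p.2 = q.2
  · rw [stepCost, stepCost, if_pos h, if_pos h.symm, h, dist_comm]
  · rw [stepCost, stepCost, if_neg h, if_neg (Ne.symm h), abs_sub_comm]

theorem dist_le_stepCost (hge : ∀ t : ℝ, 1 ≤ t → 1 ≤ φ t) {p q : X × IciOne}
    (hpq : p.1 = q.1 ∨ p.2 = q.2) : dist p q ≤ stepCost φ p q := by
  rw [Prod.dist_eq, stepCost]
  split_ifs with h
  · rw [h, dist_self, max_eq_left dist_nonneg]
    exact le_mul_of_one_le_left dist_nonneg (hge _ q.2.2)
  · rw [hpq.resolve_right h, dist_self, max_eq_right dist_nonneg, Subtype.dist_eq, Real.dist_eq]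

@[simp] theorem chainCost_singleton (a : X × IciOne) : chainCost φ [a] = 0 := rfl

theorem chainCost_cons_cons (a b : X × IciOne) (l : List (X × IciOne)) :
    chainCost φ (a :: b :: l) = stepCost φ a b + chainCost φ (b :: l) := by
  simp [chainCost]

theorem chainCost_nonneg (hφ : ∀ t : ℝ, 1 ≤ t → 0 ≤ φ t) (l : List (X × IciOne)) :
    0 ≤ chainCost φ l := by
  refine List.sum_nonneg fun c hc => ?_
  obtain ⟨⟨p, q⟩, -, rfl⟩ := List.mem_map.mp hc
  unfold stepCost
  split_ifs
  · exact mul_nonneg (hφ _ p.2.2) dist_nonneg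
  · exact abs_nonneg _

theorem chainCost_append {l₁ l₂ : List (X × IciOne)} {a b : X × IciOne}
    (ha : l₁.getLast? = some a) (hb : l₂.head? = some b) :
    chainCost φ (l₁ ++ l₂) = chainCost φ l₁ + stepCost φ a b + chainCost φ l₂ := by
  induction l₁ with
  | nil => simp at ha
  | cons x l₁ ih =>
    cases l₁ with
    | nil =>
      obtain ⟨b', l₂⟩ := l₂
      · simp at hb
      simp only [List.getLast?_singleton, List.head?_cons, Option.some_inj] at ha hb
      subst ha hb
      simp [chainCost_cons_cons]
    | cons y l₁ =>
      rw [List.getLast?_cons_cons] at ha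
      rw [List.cons_append, List.cons_append, chainCost_cons_cons, chainCost_cons_cons,
        ← List.cons_append, ih ha]
      ring

theorem chainCost_reverse (l : List (X × IciOne)) : chainCost φ l.reverse = chainCost φ l := by
  induction l with
  | nil => rfl
  | cons a l ih =>
    obtain _ | ⟨b, l⟩ := l
    · rfl
    rw [List.reverse_cons, chainCost_append φ (a := b) (b := a) (by simp) rfl, ih,
      chainCost_cons_cons, chainCost_singleton, stepCost_comm]
    ring

theorem dist_le_chainCost (hge : ∀ t : ℝ, 1 ≤ t → 1 ≤ φ t) {l : List (X × IciOne)}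
    (hl : IsHVChain l) {p q : X × IciOne} (hp : l.head? = some p) (hq : l.getLast? = some q) :
    dist p q ≤ chainCost φ l := by
  induction l generalizing p with
  | nil => simp at hp
  | cons a l ih =>
    obtain rfl : a = p := by simpa using hp
    obtain _ | ⟨b, l⟩ := l
    · obtain rfl : a = q := by simpa using hq
      simp
    rw [IsHVChain, List.Chain', List.isChain_cons_cons] at hl
    rw [List.getLast?_cons_cons] at hq
    calc dist a q ≤ dist a b + dist b q := dist_triangle _ _ _
      _ ≤ stepCost φ a b + chainCost φ (b :: l) :=
        add_le_add (dist_le_stepCost φ hge hl.1) (ih hl.2 rfl hq)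
      _ = chainCost φ (a :: b :: l) := (chainCost_cons_cons φ a b l).symm

end Chains

section WarpDist

variable {X : Type*} [MetricSpace X] (φ : ℝ → ℝ)

theorem le_warpDist {p q : X × IciOne} {c : ℝ}
    (h : ∀ l, l.head? = some p → l.getLast? = some q → IsHVChain l → c ≤ chainCost φ l) :
    c ≤ warpDist φ p q := by
  refine le_csInf ⟨_, [p, (q.1, p.2), q], rfl, rfl, ?_, rfl⟩ ?_
  · exact List.isChain_cons_cons.mpr
      ⟨Or.inr rfl, List.isChain_cons_cons.mpr ⟨Or.inl rfl, List.isChain_singleton _⟩⟩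
  · rintro _ ⟨l, hp, hq, hl, rfl⟩
    exact h l hp hq hl

theorem warpDist_le_chainCost (hφ : ∀ t : ℝ, 1 ≤ t → 0 ≤ φ t) {l : List (X × IciOne)}
    {p q : X × IciOne} (hp : l.head? = some p) (hq : l.getLast? = some q) (hl : IsHVChain l) :
    warpDist φ p q ≤ chainCost φ l :=
  csInf_le ⟨0, by rintro _ ⟨l, -, -, -, rfl⟩; exact chainCost_nonneg φ hφ l⟩ ⟨l, hp, hq, hl, rfl⟩

theorem warpDist_nonneg (hφ : ∀ t : ℝ, 1 ≤ t → 0 ≤ φ t) (p q : X × IciOne) :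
    0 ≤ warpDist φ p q :=
  le_warpDist φ fun l _ _ _ => chainCost_nonneg φ hφ l

theorem warpDist_le_stepCost (hφ : ∀ t : ℝ, 1 ≤ t → 0 ≤ φ t) {p q : X × IciOne}
    (hpq : p.1 = q.1 ∨ p.2 = q.2) : warpDist φ p q ≤ stepCost φ p q := by
  simpa [chainCost_cons_cons] using warpDist_le_chainCost φ hφ (l := [p, q]) rfl rfl
    (List.isChain_pair.mpr hpq)

theorem warpDist_self (hφ : ∀ t : ℝ, 1 ≤ t → 0 ≤ φ t) (p : X × IciOne) : warpDist φ p p = 0 :=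
  le_antisymm ((warpDist_le_stepCost φ hφ (Or.inl rfl)).trans_eq (stepCost_self φ p))
    (warpDist_nonneg φ hφ p p)

theorem warpDist_comm (p q : X × IciOne) : warpDist φ p q = warpDist φ q p := by
  unfold warpDist
  congr 1
  ext c
  constructor <;> rintro ⟨l, hp, hq, hl, rfl⟩ <;>
    exact ⟨l.reverse, by simpa using hq, by simpa using hp, hl.reverse, chainCost_reverse φ l⟩

theorem warpDist_triangle (hφ : ∀ t : ℝ, 1 ≤ t → 0 ≤ φ t) (p q s : X × IciOne) :
    warpDist φ p s ≤ warpDist φ p q + warpDist φ q s := by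
  rw [← sub_le_iff_le_add']
  refine le_warpDist φ fun l₂ h₂p h₂q h₂ => ?_
  rw [sub_le_comm]
  refine le_warpDist φ fun l₁ h₁p h₁q h₁ => ?_
  rw [sub_le_iff_le_add]
  calc warpDist φ p s ≤ chainCost φ (l₁ ++ l₂) :=
        warpDist_le_chainCost φ hφ (by simp [List.head?_append, h₁p])
          (by simp [List.getLast?_append, h₂q]) (h₁.append h₂ h₁q h₂p)
    _ = chainCost φ l₁ + chainCost φ l₂ := by
        rw [chainCost_append φ h₁q h₂p, stepCost_self, add_zero]

theorem dist_le_warpDist (hge : ∀ t : ℝ, 1 ≤ t → 1 ≤ φ t) (p q : X × IciOne) :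
    dist p q ≤ warpDist φ p q :=
  le_warpDist φ fun _ hp hq hl => dist_le_chainCost φ hge hl hp hq

end WarpDist

theorem warped_product_metric_general {X : Type*} [MetricSpace X] (φ : ℝ → ℝ)
    (hone : φ 1 = 1) (hge : ∀ t : ℝ, 1 ≤ t → 1 ≤ φ t) :
    (∀ p q : X × IciOne, 0 ≤ warpDist φ p q) ∧
    (∀ p q : X × IciOne, warpDist φ p q = warpDist φ q p) ∧
    (∀ p q s : X × IciOne, warpDist φ p s ≤ warpDist φ p q + warpDist φ q s) ∧
    (∀ p q : X × IciOne, warpDist φ p q = 0 ↔ p = q) ∧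
    (∀ x y : X, warpDist φ (x, ⟨1, le_refl 1⟩) (y, ⟨1, le_refl 1⟩) = dist x y) := by
  have hφ : ∀ t : ℝ, 1 ≤ t → 0 ≤ φ t := fun t ht => zero_le_one.trans (hge t ht)
  refine ⟨warpDist_nonneg φ hφ, warpDist_comm φ, warpDist_triangle φ hφ, fun p q => ?_,
    fun x y => ?_⟩
  · refine ⟨fun h => dist_le_zero.mp (h ▸ dist_le_warpDist φ hge p q), ?_⟩
    rintro rfl
    exact warpDist_self φ hφ p
  · apply le_antisymm
    · simpa [stepCost, hone] using
        warpDist_le_stepCost φ hφ (p := (x, ⟨1, le_refl 1⟩)) (q := (y, ⟨1, le_refl 1⟩)) (Or.inr rfl)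
    · simpa [Prod.dist_eq] using dist_le_warpDist φ hge (x, ⟨1, le_refl 1⟩) (y, ⟨1, le_refl 1⟩)

/-- If `φ : [1,∞) → [1,∞)` is continuous, strictly increasing, with `φ(1) = 1`, then the
warped path distance `ρ` is a metric on `X × [1,∞)`, and `x ↦ (x,1)` is an isometric
embedding of `X` into `(X × [1,∞), ρ)`. -/
theorem warped_product_metric {X : Type*} [MetricSpace X] (φ : ℝ → ℝ)
    (hcont : ContinuousOn φ (Set.Ici 1)) (hmono : StrictMonoOn φ (Set.Ici 1))
    (hone : φ 1 = 1) (hge : ∀ t : ℝ, 1 ≤ t → 1 ≤ φ t) :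
    (∀ p q : X × IciOne, 0 ≤ warpDist φ p q) ∧
    (∀ p q : X × IciOne, warpDist φ p q = warpDist φ q p) ∧
    (∀ p q s : X × IciOne, warpDist φ p s ≤ warpDist φ p q + warpDist φ q s) ∧
    (∀ p q : X × IciOne, warpDist φ p q = 0 ↔ p = q) ∧
    (∀ x y : X, warpDist φ (x, ⟨1, le_refl 1⟩) (y, ⟨1, le_refl 1⟩) = dist x y) :=
  warped_product_metric_general φ hone hge
end

section
/- Let X be a metric space, A ⊆ X with GA = A for a group G acting on X by isometries, and R an abelian group with G-action. Consider the inclusion j of the equivariant boundedly supported cochains C*_{b,G}(X−A;R) = {G-equivariant φ : X^{*+1} → R with ‖φ‖ coarsely contained in Δ_A} into the complex of all G-equivariant cochains, and the map i to the direct limit over r of equivariant Alexander–Spanier cochains of X − N_r(A) (restriction followed by quotient by locally zero cochains). Then the kernel of i equals the image of j; that is, a G-equivariant cochain φ restricts to a locally zero cochain on X − N_r(A) for some r if and only if ‖φ‖ ∩ Δ is coarsely contained in Δ_A. -/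
/-- The closed `r`-neighborhood of a set. -/
def nbhd {X : Type*} [MetricSpace X] (r : ℝ) (A : Set X) : Set X :=
  {x | ∃ a ∈ A, dist x a ≤ r}

/-- Coarse containment. -/
def CoarselyContained {X : Type*} [MetricSpace X] (A B : Set X) : Prop :=
  ∃ r : ℝ, 0 ≤ r ∧ A ⊆ nbhd r B

/-- `‖φ‖`: the set of diagonal points lying in the closure of the support of a cochain
`φ : X^{n+1} → R`, identified with a subset of `X`.  (`X^{n+1}` carries the sup metric.) -/
def diagSupport {X : Type*} [MetricSpace X] {R : Type*} [AddCommGroup R] {n : ℕ}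
    (φ : (Fin (n + 1) → X) → R) : Set X :=
  {x : X | (fun _ : Fin (n + 1) => x) ∈ closure {σ : Fin (n + 1) → X | φ σ ≠ 0}}

/-- A cochain is locally zero on the subspace `X − N_r(A)` if every point of that
subspace has a neighborhood such that `φ` vanishes on all tuples of points of the
subspace lying in that neighborhood. -/
def LocallyZeroOnComplement {X : Type*} [MetricSpace X] {R : Type*} [AddCommGroup R]
    {n : ℕ} (φ : (Fin (n + 1) → X) → R) (A : Set X) (r : ℝ) : Prop :=
  ∀ x : X, x ∉ nbhd r A → ∃ ε > 0, ∀ σ : Fin (n + 1) → X,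
    (∀ i, σ i ∉ nbhd r A) → (∀ i, dist (σ i) x < ε) → φ σ = 0

/-- Exactness in the middle of the four-term sequence defining equivariant boundedly
supported cohomology of the complement: a `G`-equivariant cochain `φ` restricts to a
locally zero cochain on `X − N_r(A)` for some `r ≥ 0` if and only if
`‖φ‖ ∩ Δ` is coarsely contained in `Δ_A`. -/
theorem equivariant_boundedly_supported_exactness
    {G : Type*} [Group G] {X : Type*} [MetricSpace X] [MulAction G X]
    (hiso : ∀ g : G, Isometry (fun x : X => g • x))
    (A : Set X) (hGA : ∀ g : G, (fun x : X => g • x) '' A = A)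
    {R : Type*} [AddCommGroup R] [DistribMulAction G R] {n : ℕ}
    (φ : (Fin (n + 1) → X) → R)
    (hequiv : ∀ (g : G) (σ : Fin (n + 1) → X), φ (fun i => g • σ i) = g • φ σ) :
    (∃ r : ℝ, 0 ≤ r ∧ LocallyZeroOnComplement φ A r) ↔
      CoarselyContained (diagSupport φ) A := by

  constructor
  · rintro ⟨r, hr, hloc⟩
    refine ⟨r + 1, by linarith, fun x hx => ?_⟩
    by_contra hxA
    have hxr : x ∉ nbhd r A := by
      rintro ⟨a, ha, hda⟩
      exact hxA ⟨a, ha, by linarith⟩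
    obtain ⟨ε, hε, hφ⟩ := hloc x hxr
    have hδ : (0 : ℝ) < min ε 1 := lt_min hε one_pos
    rw [diagSupport, Set.mem_setOf_eq, Metric.mem_closure_iff] at hx
    obtain ⟨σ, hσ, hd⟩ := hx _ hδ
    rw [dist_pi_lt_iff hδ] at hd
    have hclose : ∀ i, dist (σ i) x < min ε 1 := fun i => by
      rw [dist_comm]; exact hd i
    refine hσ (hφ σ (fun i => ?_) (fun i => lt_of_lt_of_le (hclose i) (min_le_left _ _)))
    rintro ⟨a, ha, hda⟩
    refine hxA ⟨a, ha, ?_⟩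
    calc dist x a ≤ dist x (σ i) + dist (σ i) a := dist_triangle _ _ _
      _ ≤ 1 + r := by
          have := lt_of_lt_of_le (hclose i) (min_le_right _ _)
          rw [dist_comm] at this
          linarith
      _ = r + 1 := by ring
  · rintro ⟨r, hr, hsub⟩
    refine ⟨r, hr, fun x hx => ?_⟩
    have hxns : x ∉ diagSupport φ := fun h => hx (hsub h)
    rw [diagSupport, Set.mem_setOf_eq, Metric.mem_closure_iff] at hxns
    push_neg at hxns
    obtain ⟨ε, hε, hεd⟩ := hxns
    refine ⟨ε, hε, fun σ _ hdσ => ?_⟩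
    by_contra hφσ
    have hlt : dist (fun _ : Fin (n + 1) => x) σ < ε := by
      rw [dist_pi_lt_iff hε]
      intro i; rw [dist_comm]; exact hdσ i
    exact absurd (hεd σ hφσ) (not_le.mpr hlt)
end
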